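/- Let V be a nonnegative random variable with distribution function F_V and let Y ~ PH(π,T) be a phase-type distributed random variable independent of V. If F_V is intermediate regularly varying (F_V ∈ I), then the distribution F_{VY} of the product VY is also intermediate regularly varying. -/

import Mathlib

open MeasureTheory ProbabilityTheory Filter Matrix Set
open scoped Topology ENNReal

noncomputable section

/-- A phase-type representation `(π, T)` of dimension `p`: `π` is a probability vector,
`T` has nonnegative off-diagonal entries, nonpositive row sums, and all eigenvalues of
strictly negative real part. -/
structure IsPHRepr {p : ℕ} (piv : Fin p → ℝ) (T : Matrix (Fin p) (Fin p) ℝ) : Prop where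
  pi_nonneg : ∀ i, 0 ≤ piv i
  pi_sum_one : ∑ i, piv i = 1
  offdiag_nonneg : ∀ i j, i ≠ j → 0 ≤ T i j
  rowsum_nonpos : ∀ i, ∑ j, T i j ≤ 0
  eig_neg : ∀ z ∈ spectrum ℂ (T.map (algebraMap ℝ ℂ)), z.re < 0

/-- Survival function `π exp(T y) e` of PH(π,T). -/
def phSurv {p : ℕ} (piv : Fin p → ℝ) (T : Matrix (Fin p) (Fin p) ℝ) (y : ℝ) : ℝ :=
  ∑ i, ∑ j, piv i * NormedSpace.exp (y • T) i j

/-- Density `π exp(T y) t`, with `t = -T e`, of PH(π,T). -/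
def phDens {p : ℕ} (piv : Fin p → ℝ) (T : Matrix (Fin p) (Fin p) ℝ) (y : ℝ) : ℝ :=
  ∑ i, ∑ j, piv i * NormedSpace.exp (y • T) i j * (-∑ k, T j k)

/-- The phase-type distribution PH(π,T): the measure on (0,∞) with Lebesgue density `phDens`. -/
def phMeasure {p : ℕ} (piv : Fin p → ℝ) (T : Matrix (Fin p) (Fin p) ℝ) : Measure ℝ :=
  volume.withDensity fun y => if 0 < y then ENNReal.ofReal (phDens piv T y) else 0

/-- The law `μ` is regularly varying with index `-α`: the tail is eventually positive and
`μ(λx,∞)/μ(x,∞) → λ^{-α}` as `x → ∞` for every `λ > 0`. -/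
def RegVary (μ : Measure ℝ) (α : ℝ) : Prop :=
  (∀ᶠ x in atTop, 0 < μ (Set.Ioi x)) ∧
  ∀ l : ℝ, 0 < l →
    Tendsto (fun x => (μ (Set.Ioi (l * x))).toReal / (μ (Set.Ioi x)).toReal) atTop
      (𝓝 (l ^ (-α)))

/-- Subexponentiality of the law `μ`: positive tail and `(1 - F*F(x))/(1 - F(x)) → 2`. -/
def Subexponential (μ : Measure ℝ) : Prop :=
  (∀ x : ℝ, 0 < μ (Set.Ioi x)) ∧
  Tendsto (fun x => ((μ.conv μ) (Set.Ioi x)).toReal / (μ (Set.Ioi x)).toReal) atTop (𝓝 2)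

/-- The class 𝒜: subexponential laws with `limsup F̄(cx)/F̄(x) < 1` for some `c > 1`. -/
def ClassA (μ : Measure ℝ) : Prop :=
  Subexponential μ ∧ ∃ c : ℝ, 1 < c ∧
    Filter.limsup (fun x => (μ (Set.Ioi (c * x))).toReal / (μ (Set.Ioi x)).toReal) atTop < 1

/-- Extended regular variation: `liminf F̄(λx)/F̄(x) ≥ λ^{-φ}` for some `φ ≥ 0`, all `λ ≥ 1`. -/
def ExtRegVary (μ : Measure ℝ) : Prop :=
  ∃ φ : ℝ, 0 ≤ φ ∧ ∀ l : ℝ, 1 ≤ l →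
    l ^ (-φ) ≤
      Filter.liminf (fun x => (μ (Set.Ioi (l * x))).toReal / (μ (Set.Ioi x)).toReal) atTop

/-- Intermediate regular variation: `lim_{λ↓1} liminf_{x→∞} F̄(λx)/F̄(x) = 1`. -/
def IntRegVary (μ : Measure ℝ) : Prop :=
  Tendsto
    (fun l : ℝ =>
      Filter.liminf (fun x => (μ (Set.Ioi (l * x))).toReal / (μ (Set.Ioi x)).toReal) atTop)
    (𝓝[>] (1 : ℝ)) (𝓝 1)

/-- Dominated variation: `liminf F̄(λx)/F̄(x) > 0` for some `λ > 1`. -/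
def DomVary (μ : Measure ℝ) : Prop :=
  ∃ l : ℝ, 1 < l ∧
    0 < Filter.liminf (fun x => (μ (Set.Ioi (l * x))).toReal / (μ (Set.Ioi x)).toReal) atTop

/-- Long-tailed laws: positive tail and `F̄(x-y)/F̄(x) → 1` for every `y`. -/
def LongTailed (μ : Measure ℝ) : Prop :=
  (∀ x : ℝ, 0 < μ (Set.Ioi x)) ∧
  ∀ y : ℝ,
    Tendsto (fun x => (μ (Set.Ioi (x - y))).toReal / (μ (Set.Ioi x)).toReal) atTop (𝓝 1)

/-- `μY` is α-regular-variation determining: for every law `μZ` of a nonnegative random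
variable (taken independent of `Y`, i.e. via the product measure), regular variation with
index `-α` of the law of the product implies that of `μZ`. -/
def IsRVD (μY : Measure ℝ) (α : ℝ) : Prop :=
  ∀ μZ : Measure ℝ, IsProbabilityMeasure μZ → μZ (Set.Iio 0) = 0 →
    RegVary (Measure.map (fun q : ℝ × ℝ => q.1 * q.2) (μY.prod μZ)) α → RegVary μZ α

/-!
Let `G` be the tail of `V` and `ν` the law of `Y`; the tail of `VY` is
`F(x) = ∫_{(0,∞)} G(x/y) dν(y)`. Intermediate regular variation gives `l > 1` and `a > 0` with
`G(lu) ≥ a G(u)` for large `u`, hence a polynomial lower bound `G(u) ≥ c u^{-K}`, and so also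
`F(x) ≥ c' x^{-K}`. A phase-type law has an exponentially small tail, because every eigenvalue of
`T` has negative real part; therefore `ν(x/U, ∞) = o(F(x))` for every `U > 0`. Given
`b < liminf G(lu)/G(u)`, choose `U` with `G(lu) ≥ b G(u)` for `u ≥ U`: on `y ≤ x/U` this bounds
the integrand of `F(lx)` below by `b G(x/y)`, so `F(lx) ≥ b (F(x) - ν(x/U, ∞))`. Thus
`liminf G(lu)/G(u) ≤ liminf F(lx)/F(x) ≤ 1`, and letting `l ↓ 1` gives the claim.
-/

namespace Matrix

open NormedSpace

variable {n : Type*} [Fintype n] [DecidableEq n]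

theorem exists_pos_forall_spectrum_re_lt
    {A : Matrix n n ℂ} (hA : ∀ z ∈ spectrum ℂ A, z.re < 0) :
    ∃ δ, 0 < δ ∧ ∀ z ∈ spectrum ℂ A, z.re < -δ := by
  obtain hempty | hne := (spectrum ℂ A).eq_empty_or_nonempty
  · exact ⟨1, one_pos, by simp [hempty]⟩
  obtain ⟨z₀, hz₀, hmax⟩ := Set.exists_max_image _ Complex.re (finite_spectrum A) hne
  refine ⟨-z₀.re / 2, by linarith [hA z₀ hz₀], fun z hz => ?_⟩
  linarith [hmax z hz, hA z₀ hz₀]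

attribute [local instance] Matrix.linftyOpNormedAddCommGroup Matrix.linftyOpNormedRing
  Matrix.linftyOpNormedAlgebra

theorem exp_mulVec_eq_sum_of_pow_mulVec_eq_zero {𝕂 : Type*} [RCLike 𝕂] {N : Matrix n n 𝕂}
    {v : n → 𝕂} {k : ℕ} (hv : (N ^ k) *ᵥ v = 0) :
    exp N *ᵥ v = ∑ i ∈ Finset.range k, (i.factorial : 𝕂)⁻¹ • ((N ^ i) *ᵥ v) := by
  let mulVecRight : Matrix n n 𝕂 →+ (n → 𝕂) :=
    { toFun := fun M => M *ᵥ v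
      map_zero' := zero_mulVec v
      map_add' := fun A B => add_mulVec A B v }
  have hseries := (exp_series_hasSum_exp' (𝕂 := 𝕂) N).map mulVecRight
    (continuous_id.matrix_mulVec continuous_const)
  refine hseries.unique (hasSum_sum_of_ne_finset_zero fun i hi => ?_) |>.trans
    (Finset.sum_congr rfl fun i _ => smul_mulVec _ _ _)
  have hki : k ≤ i := by simpa using hi
  have hNi : (N ^ i) *ᵥ v = 0 := by
    rw [← Nat.sub_add_cancel hki, pow_add, ← mulVec_mulVec, hv, mulVec_zero]
  simp only [mulVecRight, AddMonoidHom.coe_mk, ZeroHom.coe_mk, Function.comp_apply, smul_mulVec,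
    hNi, smul_zero]

theorem norm_exp_smul_mulVec_le_of_pow_sub_mulVec_eq_zero {T : Matrix n n ℂ} {μ : ℂ}
    {v : n → ℂ} {k : ℕ} (hv : ((T - μ • 1) ^ k) *ᵥ v = 0) {δ : ℝ} (hμ : μ.re < -δ) :
    ∃ C, ∀ y : ℝ, 0 ≤ y → ‖exp ((y : ℂ) • T) *ᵥ v‖ ≤ C * Real.exp (-δ * y) := by
  set N := T - μ • 1
  set ε := -δ - μ.re
  have hε : 0 < ε := by linarith
  refine ⟨∑ i ∈ Finset.range k, ε⁻¹ ^ i * ‖(N ^ i) *ᵥ v‖, fun y hy => ?_⟩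
  have hsplit : exp ((y : ℂ) • T) = Complex.exp (y * μ) • exp ((y : ℂ) • N) := by
    have hcomm : Commute (((y : ℂ) * μ) • (1 : Matrix n n ℂ)) ((y : ℂ) • N) :=
      ((Commute.one_left N).smul_right _).smul_left _
    have hscalar : exp (((y : ℂ) * μ) • (1 : Matrix n n ℂ)) = Complex.exp (y * μ) • 1 := by
      rw [← Algebra.algebraMap_eq_smul_one, Complex.exp_eq_exp_ℂ, ← Algebra.algebraMap_eq_smul_one]
      exact (algebraMap_exp_comm _).symm
    rw [show (y : ℂ) • T = ((y : ℂ) * μ) • (1 : Matrix n n ℂ) + (y : ℂ) • N by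
        simp only [N, smul_sub, smul_smul]; abel,
      exp_add_of_commute _ _ hcomm, hscalar, smul_mul_assoc, one_mul]
  have hyN : (((y : ℂ) • N) ^ k) *ᵥ v = 0 := by rw [smul_pow, smul_mulVec, hv, smul_zero]
  have hterm : ∀ i, ‖(i.factorial : ℂ)⁻¹ • ((((y : ℂ) • N) ^ i) *ᵥ v)‖
      ≤ ε⁻¹ ^ i * ‖(N ^ i) *ᵥ v‖ * Real.exp (ε * y) := by
    intro i
    have hfac : y ^ i / i.factorial ≤ ε⁻¹ ^ i * Real.exp (ε * y) := by
      calc y ^ i / i.factorial = ε⁻¹ ^ i * ((ε * y) ^ i / i.factorial) := by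
            rw [mul_pow, ← mul_div_assoc, ← mul_assoc, ← mul_pow, inv_mul_cancel₀ hε.ne', one_pow,
              one_mul]
        _ ≤ ε⁻¹ ^ i * Real.exp (ε * y) := by
            gcongr; exact Real.pow_div_factorial_le_exp _ (by positivity) i
    rw [smul_pow, smul_mulVec, smul_smul, norm_smul, norm_mul, norm_inv, norm_pow,
      Complex.norm_real, Complex.norm_natCast, Real.norm_of_nonneg hy, inv_mul_eq_div]
    calc y ^ i / i.factorial * ‖(N ^ i) *ᵥ v‖
        ≤ ε⁻¹ ^ i * Real.exp (ε * y) * ‖(N ^ i) *ᵥ v‖ := by gcongr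
      _ = ε⁻¹ ^ i * ‖(N ^ i) *ᵥ v‖ * Real.exp (ε * y) := by ring
  have hexp : Real.exp (y * μ.re) * Real.exp (ε * y) = Real.exp (-δ * y) := by
    rw [← Real.exp_add]; congr 1; simp only [ε]; ring
  calc ‖exp ((y : ℂ) • T) *ᵥ v‖
      = Real.exp (y * μ.re) *
          ‖∑ i ∈ Finset.range k, (i.factorial : ℂ)⁻¹ • ((((y : ℂ) • N) ^ i) *ᵥ v)‖ := by
        rw [hsplit, smul_mulVec, norm_smul, Complex.norm_exp, Complex.mul_re, Complex.ofReal_re,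
          Complex.ofReal_im, zero_mul, sub_zero, exp_mulVec_eq_sum_of_pow_mulVec_eq_zero hyN]
    _ ≤ Real.exp (y * μ.re) *
          ∑ i ∈ Finset.range k, ε⁻¹ ^ i * ‖(N ^ i) *ᵥ v‖ * Real.exp (ε * y) := by
        gcongr
        exact (norm_sum_le _ _).trans (Finset.sum_le_sum fun i _ => hterm i)
    _ = (∑ i ∈ Finset.range k, ε⁻¹ ^ i * ‖(N ^ i) *ᵥ v‖) * Real.exp (-δ * y) := by
        rw [← Finset.sum_mul, ← hexp]; ring

theorem exists_norm_exp_smul_mulVec_le {T : Matrix n n ℂ} {δ : ℝ}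
    (hT : ∀ z ∈ spectrum ℂ T, z.re < -δ) (v : n → ℂ) :
    ∃ C, ∀ y : ℝ, 0 ≤ y → ‖exp ((y : ℂ) • T) *ᵥ v‖ ≤ C * Real.exp (-δ * y) := by
  have hv : v ∈ ⨆ μ, Module.End.maxGenEigenspace (toLinAlgEquiv' T) μ := by
    rw [Module.End.iSup_maxGenEigenspace_eq_top]; trivial
  induction hv using Submodule.iSup_induction' with
  | mem μ w hw =>
    obtain rfl | hw0 := eq_or_ne w 0
    · exact ⟨0, fun y _ => by simp⟩
    have hμ : μ ∈ spectrum ℂ T := by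
      have hgen : Module.End.HasUnifEigenvalue (toLinAlgEquiv' T) μ ⊤ :=
        (Submodule.ne_bot_iff _).2 ⟨w, hw, hw0⟩
      rw [← AlgEquiv.spectrum_eq toLinAlgEquiv' T, ← Module.End.hasEigenvalue_iff_mem_spectrum]
      exact hgen.lt zero_lt_one
    obtain ⟨k, hk⟩ := (Module.End.mem_maxGenEigenspace _ μ w).1 hw
    have hk' : ((T - μ • 1) ^ k) *ᵥ w = 0 := by
      rwa [← map_one toLinAlgEquiv', ← map_smul, ← map_sub, ← map_pow, toLinAlgEquiv'_apply] at hk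
    exact norm_exp_smul_mulVec_le_of_pow_sub_mulVec_eq_zero hk' (hT μ hμ)
  | zero => exact ⟨0, fun y _ => by simp⟩
  | add w₁ w₂ _ _ h₁ h₂ =>
    obtain ⟨C₁, hC₁⟩ := h₁
    obtain ⟨C₂, hC₂⟩ := h₂
    refine ⟨C₁ + C₂, fun y hy => ?_⟩
    rw [mulVec_add, add_mul]
    exact (norm_add_le _ _).trans (add_le_add (hC₁ y hy) (hC₂ y hy))

theorem exists_abs_exp_smul_apply_le {T : Matrix n n ℝ} {δ : ℝ}
    (hT : ∀ z ∈ spectrum ℂ (T.map (algebraMap ℝ ℂ)), z.re < -δ) :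
    ∃ C, 0 ≤ C ∧ ∀ y : ℝ, 0 ≤ y → ∀ i j, |exp (y • T) i j| ≤ C * Real.exp (-δ * y) := by
  choose C hC using exists_norm_exp_smul_mulVec_le hT
  refine ⟨∑ j, |C (Pi.single j 1)|, by positivity, fun y hy i j => ?_⟩
  have hcomplex : (exp (y • T)).map (algebraMap ℝ ℂ)
      = exp ((y : ℂ) • T.map (algebraMap ℝ ℂ)) := by
    have hcont : Continuous ((algebraMap ℝ ℂ).mapMatrix : Matrix n n ℝ →+* Matrix n n ℂ) :=
      continuous_id.matrix_map Complex.continuous_ofReal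
    have hmap := map_exp _ hcont (y • T)
    simp only [RingHom.mapMatrix_apply] at hmap
    exact hmap.trans (by congr 1; ext; simp)
  calc |exp (y • T) i j|
      = ‖(exp ((y : ℂ) • T.map (algebraMap ℝ ℂ)) *ᵥ Pi.single j 1) i‖ := by
        rw [mulVec_single_one, ← hcomplex]; simp
    _ ≤ C (Pi.single j 1) * Real.exp (-δ * y) := (norm_le_pi_norm _ i).trans (hC _ y hy)
    _ ≤ (∑ j, |C (Pi.single j 1)|) * Real.exp (-δ * y) := by
        gcongr
        exact (le_abs_self _).trans
          (Finset.single_le_sum (f := fun j => |C (Pi.single j 1)|) (fun _ _ => abs_nonneg _)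
            (Finset.mem_univ j))

end Matrix

section PhaseType

variable {p : ℕ} (piv : Fin p → ℝ) (T : Matrix (Fin p) (Fin p) ℝ)

theorem phMeasure_Iic_zero : phMeasure piv T (Iic 0) = 0 := by
  rw [phMeasure, withDensity_apply _ measurableSet_Iic,
    setLIntegral_congr_fun measurableSet_Iic fun y (hy : y ≤ 0) => if_neg hy.not_gt]
  simp

theorem abs_phDens_le {y B : ℝ} (hB : ∀ i j, |NormedSpace.exp (y • T) i j| ≤ B) :
    |phDens piv T y| ≤ (∑ i, ∑ j, |piv i| * |∑ k, T j k|) * B := by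
  unfold phDens
  rw [Finset.sum_mul]
  refine (Finset.abs_sum_le_sum_abs _ _).trans (Finset.sum_le_sum fun i _ => ?_)
  rw [Finset.sum_mul]
  refine (Finset.abs_sum_le_sum_abs _ _).trans (Finset.sum_le_sum fun j _ => ?_)
  rw [abs_mul, abs_mul, abs_neg]
  calc |piv i| * |NormedSpace.exp (y • T) i j| * |∑ k, T j k|
      ≤ |piv i| * B * |∑ k, T j k| := by gcongr; exact hB i j
    _ = |piv i| * |∑ k, T j k| * B := by ring

theorem exists_phMeasure_Ioi_le_exp
    (hT : ∀ z ∈ spectrum ℂ (T.map (algebraMap ℝ ℂ)), z.re < 0) :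
    ∃ δ C : ℝ, 0 < δ ∧ 0 ≤ C ∧ ∀ s, 0 ≤ s →
      phMeasure piv T (Ioi s) ≤ ENNReal.ofReal (C * Real.exp (-δ * s)) := by
  obtain ⟨δ, hδ, hTδ⟩ := Matrix.exists_pos_forall_spectrum_re_lt hT
  obtain ⟨B, hB₀, hB⟩ := Matrix.exists_abs_exp_smul_apply_le hTδ
  set D := (∑ i, ∑ j, |piv i| * |∑ k, T j k|) * B
  have hdens : ∀ y, 0 ≤ y → |phDens piv T y| ≤ D * Real.exp (-δ * y) := fun y hy => by
    simpa only [D, mul_assoc] using abs_phDens_le piv T (hB y hy)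
  refine ⟨δ, D / δ, hδ, by positivity, fun s hs => ?_⟩
  have hint : IntegrableOn (fun y => D * Real.exp (-δ * y)) (Ioi s) :=
    (integrableOn_exp_mul_Ioi (neg_lt_zero.2 hδ) s).const_mul D
  rw [phMeasure, withDensity_apply _ measurableSet_Ioi]
  calc ∫⁻ y in Ioi s, (if 0 < y then ENNReal.ofReal (phDens piv T y) else 0)
      ≤ ∫⁻ y in Ioi s, ENNReal.ofReal (D * Real.exp (-δ * y)) := by
        refine setLIntegral_mono' measurableSet_Ioi fun y (hy : s < y) => ?_
        split_ifs
        · exact ENNReal.ofReal_le_ofReal ((le_abs_self _).trans (hdens y (hs.trans hy.le)))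
        · exact zero_le
    _ = ENNReal.ofReal (∫ y in Ioi s, D * Real.exp (-δ * y)) :=
        (ofReal_integral_eq_lintegral_ofReal hint
          (ae_restrict_of_forall_mem measurableSet_Ioi fun y (hy : s < y) =>
            (abs_nonneg _).trans (hdens y (hs.trans hy.le)))).symm
    _ = ENNReal.ofReal (D / δ * Real.exp (-δ * s)) := by
        rw [integral_const_mul, integral_exp_mul_Ioi (neg_lt_zero.2 hδ)]
        congr 1
        field_simp

end PhaseType

theorem Antitone.exists_rpow_neg_le_of_mul_le {g : ℝ → ℝ} (hg : Antitone g) {x₀ l K : ℝ}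
    (hx₀ : 0 < x₀) (hl : 1 < l) (hK : 0 ≤ K) (hg₀ : 0 < g x₀)
    (hstep : ∀ u, x₀ ≤ u → l ^ (-K) * g u ≤ g (l * u)) :
    ∃ c, 0 < c ∧ ∀ u, x₀ ≤ u → c * u ^ (-K) ≤ g u := by
  have hl₀ : 0 < l := one_pos.trans hl
  have hiter : ∀ m : ℕ, (l ^ (-K)) ^ m * g x₀ ≤ g (l ^ m * x₀) := by
    intro m
    induction m with
    | zero => simp
    | succ m ih =>
      have hx : x₀ ≤ l ^ m * x₀ := le_mul_of_one_le_left hx₀.le (one_le_pow₀ hl.le)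
      calc (l ^ (-K)) ^ (m + 1) * g x₀ = l ^ (-K) * ((l ^ (-K)) ^ m * g x₀) := by ring
        _ ≤ l ^ (-K) * g (l ^ m * x₀) := by gcongr
        _ ≤ g (l * (l ^ m * x₀)) := hstep _ hx
        _ = g (l ^ (m + 1) * x₀) := by rw [pow_succ']; ring_nf
  refine ⟨l ^ (-K) * g x₀ * x₀ ^ K, by positivity, fun u hu => ?_⟩
  obtain ⟨m, hm, hm'⟩ := exists_nat_pow_near ((one_le_div hx₀).2 hu) hl
  have hu₀ : 0 < u := hx₀.trans_le hu
  calc l ^ (-K) * g x₀ * x₀ ^ K * u ^ (-K) = l ^ (-K) * g x₀ * (u / x₀) ^ (-K) := by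
        rw [Real.div_rpow hu₀.le hx₀.le, Real.rpow_neg hx₀.le, div_inv_eq_mul]; ring
    _ ≤ l ^ (-K) * g x₀ * (l ^ m) ^ (-K) :=
        mul_le_mul_of_nonneg_left (Real.rpow_le_rpow_of_nonpos (by positivity) hm (neg_nonpos.2 hK))
          (by positivity)
    _ = (l ^ (-K)) ^ (m + 1) * g x₀ := by rw [← Real.rpow_pow_comm hl₀.le]; ring
    _ ≤ g (l ^ (m + 1) * x₀) := hiter (m + 1)
    _ ≤ g u := hg ((div_lt_iff₀ hx₀).1 hm').le

def tailRatio (μ : Measure ℝ) (l x : ℝ) : ℝ :=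
  (μ (Ioi (l * x))).toReal / (μ (Ioi x)).toReal

section TailRatio

variable (μ : Measure ℝ) {l : ℝ}

theorem tailRatio_nonneg (l x : ℝ) : 0 ≤ tailRatio μ l x := by
  unfold tailRatio; positivity

theorem isBoundedUnder_ge_tailRatio (l : ℝ) : IsBoundedUnder (· ≥ ·) atTop (tailRatio μ l) :=
  isBoundedUnder_of ⟨0, tailRatio_nonneg μ l⟩

variable [IsFiniteMeasure μ]

theorem tailRatio_le_one (hl : 1 ≤ l) {x : ℝ} (hx : 0 ≤ x) : tailRatio μ l x ≤ 1 :=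
  div_le_one_of_le₀ (measureReal_mono (Ioi_subset_Ioi (le_mul_of_one_le_left hx hl)))
    ENNReal.toReal_nonneg

theorem isBoundedUnder_le_tailRatio (hl : 1 ≤ l) : IsBoundedUnder (· ≤ ·) atTop (tailRatio μ l) :=
  isBoundedUnder_of_eventually_le <|
    eventually_ge_atTop 0 |>.mono fun _ hx => tailRatio_le_one μ hl hx

theorem liminf_tailRatio_nonneg (hl : 1 ≤ l) : 0 ≤ liminf (tailRatio μ l) atTop :=
  le_liminf_of_le (isBoundedUnder_le_tailRatio μ hl).isCoboundedUnder_ge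
    (Eventually.of_forall (tailRatio_nonneg μ l))

theorem liminf_tailRatio_le_one (hl : 1 ≤ l) : liminf (tailRatio μ l) atTop ≤ 1 :=
  liminf_le_of_frequently_le
    ((eventually_ge_atTop 0).mono fun _ hx => tailRatio_le_one μ hl hx).frequently
    (isBoundedUnder_ge_tailRatio μ l)

end TailRatio

theorem IntRegVary.domVary {μ : Measure ℝ} (h : IntRegVary μ) : DomVary μ := by
  obtain ⟨l, hl, hpos⟩ :=
    ((h.eventually (lt_mem_nhds one_pos)).and self_mem_nhdsWithin).exists
  exact ⟨l, hpos, hl⟩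

theorem DomVary.exists_rpow_neg_le_measure_Ioi {μ : Measure ℝ} [IsFiniteMeasure μ]
    (h : DomVary μ) :
    ∃ K c x₀ : ℝ, 0 < c ∧ 0 < x₀ ∧ ∀ u, x₀ ≤ u → c * u ^ (-K) ≤ (μ (Ioi u)).toReal := by
  obtain ⟨l, hl, hL⟩ := h
  set a := min (liminf (tailRatio μ l) atTop / 2) 1
  have ha : 0 < a := lt_min (half_pos hL) one_pos
  have haL : a < liminf (tailRatio μ l) atTop := (min_le_left _ _).trans_lt (half_lt_self hL)
  obtain ⟨x₁, hx₁⟩ := eventually_atTop.1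
    (eventually_lt_of_lt_liminf haL (isBoundedUnder_ge_tailRatio μ l))
  set x₀ := max x₁ 1
  have hratio : ∀ u, x₀ ≤ u →
      0 < (μ (Ioi u)).toReal ∧ a * (μ (Ioi u)).toReal < (μ (Ioi (l * u))).toReal := by
    intro u hu
    have h := hx₁ u ((le_max_left _ _).trans hu)
    have hG : 0 < (μ (Ioi u)).toReal := by
      refine ENNReal.toReal_nonneg.lt_of_ne fun h0 => ?_
      simp only [tailRatio, ← h0, div_zero] at h
      exact ha.not_gt h
    exact ⟨hG, (lt_div_iff₀ hG).1 h⟩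
  set K := -Real.logb l a
  have hlK : l ^ (-K) = a := by
    rw [neg_neg, Real.rpow_logb (one_pos.trans hl) hl.ne' ha]
  have hK : 0 ≤ K := neg_nonneg.2 (Real.logb_nonpos hl ha.le (min_le_right _ _))
  have hx₀ : 0 < x₀ := one_pos.trans_le (le_max_right _ _)
  obtain ⟨c, hc, hbound⟩ := Antitone.exists_rpow_neg_le_of_mul_le
    (g := fun u => (μ (Ioi u)).toReal)
    (fun u v huv => measureReal_mono (Ioi_subset_Ioi huv) (measure_ne_top μ _)) hx₀ hl hK
    (hratio x₀ le_rfl).1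
    (fun u hu => hlK ▸ (hratio u hu).2.le)
  exact ⟨K, c, x₀, hc, hx₀, hbound⟩

theorem map_mul_prod_apply_Ioi {μ ν : Measure ℝ} [SFinite μ] [SFinite ν] (hν : ν (Iic 0) = 0)
    (x : ℝ) :
    (μ.prod ν).map (fun q => q.1 * q.2) (Ioi x) = ∫⁻ y in Ioi 0, μ (Ioi (x / y)) ∂ν := by
  have hmul : Measurable fun q : ℝ × ℝ => q.1 * q.2 := measurable_fst.mul measurable_snd
  have hν' : ν.restrict (Ioi 0) = ν :=
    Measure.restrict_eq_self_of_ae_mem (by rwa [ae_iff, ← compl_def, compl_Ioi])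
  rw [Measure.map_apply hmul measurableSet_Ioi, Measure.prod_apply_symm (hmul measurableSet_Ioi)]
  conv_lhs => rw [← hν']
  refine setLIntegral_congr_fun measurableSet_Ioi fun y (hy : 0 < y) => ?_
  congr 1
  ext v
  exact (div_lt_iff₀ hy).symm

theorem exists_measure_Ioi_pos_of_measure_Ioi_ne_zero {ν : Measure ℝ} {a : ℝ}
    (h : ν (Ioi a) ≠ 0) : ∃ b, a < b ∧ 0 < ν (Ioi b) := by
  by_contra! hnull
  refine h (measure_mono_null (fun y (hy : a < y) => ?_) (measure_iUnion_null fun n : ℕ =>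
    nonpos_iff_eq_zero.1 (hnull (a + 1 / (n + 1)) (by simp; positivity))))
  obtain ⟨n, hn⟩ := exists_nat_one_div_lt (sub_pos.2 hy)
  exact mem_iUnion.2 ⟨n, show a + 1 / (n + 1) < y by linarith⟩

theorem tendsto_measure_Ioi_div_measure_Ioi_of_exp_of_rpow {ν μ : Measure ℝ} [IsFiniteMeasure ν]
    [IsFiniteMeasure μ] {δ C K c x₀ U : ℝ} (hδ : 0 < δ) (hC : 0 ≤ C)
    (hν : ∀ s, 0 ≤ s → ν (Ioi s) ≤ ENNReal.ofReal (C * Real.exp (-δ * s))) (hc : 0 < c)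
    (hμ : ∀ x, x₀ ≤ x → c * x ^ (-K) ≤ (μ (Ioi x)).toReal) (hU : 0 < U) :
    Tendsto (fun x => (ν (Ioi (x / U))).toReal / (μ (Ioi x)).toReal) atTop (𝓝 0) := by
  refine squeeze_zero' (Eventually.of_forall fun x => by positivity) ?_
    (by simpa only [mul_zero] using (tendsto_rpow_mul_exp_neg_mul_atTop_nhds_zero K (δ / U)
      (div_pos hδ hU)).const_mul (C / c))
  filter_upwards [eventually_ge_atTop x₀, eventually_gt_atTop 0] with x hx hx0
  have hnum : (ν (Ioi (x / U))).toReal ≤ C * Real.exp (-(δ / U) * x) := by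
    have h := ENNReal.toReal_le_of_le_ofReal (by positivity) (hν (x / U) (by positivity))
    rwa [show -δ * (x / U) = -(δ / U) * x by ring] at h
  calc (ν (Ioi (x / U))).toReal / (μ (Ioi x)).toReal
      ≤ C * Real.exp (-(δ / U) * x) / (c * x ^ (-K)) :=
        div_le_div₀ (by positivity) hnum (by positivity) (hμ x hx)
    _ = C / c * (x ^ K * Real.exp (-(δ / U) * x)) := by
        rw [Real.rpow_neg hx0.le]
        field_simp

section ProductTail

/- Throughout, `htail` expresses `μ` as the law of `VY` with `V ∼ μV` and `Y ∼ ν` independent and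
`Y > 0`; see `map_mul_prod_apply_Ioi`. -/

variable {μV ν μ : Measure ℝ}

theorem mul_measure_Ioi_le_of_tail_eq
    (htail : ∀ x, μ (Ioi x) = ∫⁻ y in Ioi 0, μV (Ioi (x / y)) ∂ν) {x y₀ : ℝ} (hx : 0 ≤ x)
    (hy₀ : 0 < y₀) :
    μV (Ioi (x / y₀)) * ν (Ioi y₀) ≤ μ (Ioi x) := by
  rw [htail, ← setLIntegral_const]
  calc ∫⁻ _ in Ioi y₀, μV (Ioi (x / y₀)) ∂ν ≤ ∫⁻ y in Ioi y₀, μV (Ioi (x / y)) ∂ν :=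
        setLIntegral_mono' measurableSet_Ioi fun y (hy : y₀ < y) =>
          measure_mono (Ioi_subset_Ioi (div_le_div_of_nonneg_left hx hy₀ hy.le))
    _ ≤ ∫⁻ y in Ioi 0, μV (Ioi (x / y)) ∂ν := lintegral_mono_set (Ioi_subset_Ioi hy₀.le)

theorem ofReal_mul_tsub_le_measure_Ioi_mul [IsProbabilityMeasure μV]
    (htail : ∀ x, μ (Ioi x) = ∫⁻ y in Ioi 0, μV (Ioi (x / y)) ∂ν) {b l U x : ℝ}
    (hU : 0 < U) (hx : 0 ≤ x)
    (hstep : ∀ u, U ≤ u → ENNReal.ofReal b * μV (Ioi u) ≤ μV (Ioi (l * u))) :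
    ENNReal.ofReal b * (μ (Ioi x) - ν (Ioi (x / U))) ≤ μ (Ioi (l * x)) := by
  set A := ∫⁻ y in Ioc 0 (x / U), μV (Ioi (x / y)) ∂ν
  have hsplit : μ (Ioi x) ≤ A + ν (Ioi (x / U)) := by
    rw [htail, ← Ioc_union_Ioi_eq_Ioi (div_nonneg hx hU.le)]
    refine (lintegral_union_le _ _ _).trans (add_le_add le_rfl ?_)
    calc ∫⁻ y in Ioi (x / U), μV (Ioi (x / y)) ∂ν ≤ ∫⁻ _ in Ioi (x / U), 1 ∂ν :=
          setLIntegral_mono' measurableSet_Ioi fun _ _ => prob_le_one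
      _ = ν (Ioi (x / U)) := setLIntegral_one _
  calc ENNReal.ofReal b * (μ (Ioi x) - ν (Ioi (x / U))) ≤ ENNReal.ofReal b * A := by
        gcongr; exact tsub_le_iff_right.2 hsplit
    _ = ∫⁻ y in Ioc 0 (x / U), ENNReal.ofReal b * μV (Ioi (x / y)) ∂ν :=
        (lintegral_const_mul' _ _ ENNReal.ofReal_ne_top).symm
    _ ≤ ∫⁻ y in Ioc 0 (x / U), μV (Ioi (l * x / y)) ∂ν := by
        refine setLIntegral_mono' measurableSet_Ioc fun y hy => ?_
        rw [mul_div_assoc]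
        exact hstep _ ((le_div_iff₀ hy.1).2 ((le_div_iff₀' hU).1 hy.2))
    _ ≤ μ (Ioi (l * x)) := by rw [htail]; exact lintegral_mono_set Ioc_subset_Ioi_self

theorem exists_rpow_neg_le_measure_Ioi_of_tail_eq [IsFiniteMeasure μV] [IsFiniteMeasure ν]
    [IsFiniteMeasure μ] (htail : ∀ x, μ (Ioi x) = ∫⁻ y in Ioi 0, μV (Ioi (x / y)) ∂ν)
    (hV : DomVary μV) (hν : ν (Ioi 0) ≠ 0) :
    ∃ K c x₀ : ℝ, 0 < c ∧ 0 < x₀ ∧ ∀ x, x₀ ≤ x → c * x ^ (-K) ≤ (μ (Ioi x)).toReal := by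
  obtain ⟨K, c, u₀, hc, hu₀, hlow⟩ := hV.exists_rpow_neg_le_measure_Ioi
  obtain ⟨y₀, hy₀, hνy₀⟩ := exists_measure_Ioi_pos_of_measure_Ioi_ne_zero hν
  have hm : 0 < (ν (Ioi y₀)).toReal := ENNReal.toReal_pos hνy₀.ne' (measure_ne_top ν _)
  refine ⟨K, c * (ν (Ioi y₀)).toReal * y₀ ^ K, u₀ * y₀, by positivity, by positivity,
    fun x hx => ?_⟩
  have hx0 : 0 < x := (mul_pos hu₀ hy₀).trans_le hx
  calc c * (ν (Ioi y₀)).toReal * y₀ ^ K * x ^ (-K)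
      = c * (x / y₀) ^ (-K) * (ν (Ioi y₀)).toReal := by
        rw [Real.div_rpow hx0.le hy₀.le, Real.rpow_neg hx0.le, Real.rpow_neg hy₀.le]
        field_simp
    _ ≤ (μV (Ioi (x / y₀))).toReal * (ν (Ioi y₀)).toReal :=
        mul_le_mul_of_nonneg_right (hlow _ ((le_div_iff₀ hy₀).2 hx)) hm.le
    _ ≤ (μ (Ioi x)).toReal := by
        rw [← ENNReal.toReal_mul]
        exact ENNReal.toReal_mono (measure_ne_top μ _)
          (mul_measure_Ioi_le_of_tail_eq htail hx0.le hy₀)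

theorem liminf_tailRatio_le_liminf_tailRatio_of_tail_eq [IsProbabilityMeasure μV]
    [IsFiniteMeasure ν] [IsFiniteMeasure μ]
    (htail : ∀ x, μ (Ioi x) = ∫⁻ y in Ioi 0, μV (Ioi (x / y)) ∂ν) (hpos : ∀ᶠ x in atTop, 0 < μ (Ioi x))
    (hnegl : ∀ U, 0 < U →
      Tendsto (fun x => (ν (Ioi (x / U))).toReal / (μ (Ioi x)).toReal) atTop (𝓝 0))
    {l : ℝ} (hl : 1 ≤ l) :
    liminf (tailRatio μV l) atTop ≤ liminf (tailRatio μ l) atTop := by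
  refine le_of_forall_lt_imp_le_of_dense fun b hb => ?_
  obtain hb0 | hb0 := le_or_gt b 0
  · exact hb0.trans (liminf_tailRatio_nonneg μ hl)
  obtain ⟨U₀, hU₀⟩ := eventually_atTop.1
    (eventually_lt_of_lt_liminf hb (isBoundedUnder_ge_tailRatio μV l))
  set U := max U₀ 1
  have hU : 0 < U := one_pos.trans_le (le_max_right _ _)
  have hstep : ∀ u, U ≤ u → ENNReal.ofReal b * μV (Ioi u) ≤ μV (Ioi (l * u)) := by
    intro u hu
    have hbu : b < tailRatio μV l u := hU₀ u ((le_max_left _ _).trans hu)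
    have hreal : b * (μV (Ioi u)).toReal ≤ (μV (Ioi (l * u))).toReal := by
      obtain h0 | hG := (ENNReal.toReal_nonneg (a := μV (Ioi u))).eq_or_lt
      · rw [← h0, mul_zero]; exact ENNReal.toReal_nonneg
      · exact ((lt_div_iff₀ hG).1 hbu).le
    rw [← ENNReal.ofReal_toReal (measure_ne_top μV (Ioi u)), ← ENNReal.ofReal_mul hb0.le]
    exact ENNReal.ofReal_le_of_le_toReal hreal
  have hlower : ∀ᶠ x in atTop,
      b * (1 - (ν (Ioi (x / U))).toReal / (μ (Ioi x)).toReal) ≤ tailRatio μ l x := by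
    filter_upwards [hpos, eventually_ge_atTop 0] with x hFx hx
    have hFx' : 0 < (μ (Ioi x)).toReal := ENNReal.toReal_pos hFx.ne' (measure_ne_top μ _)
    have hsplit := ofReal_mul_tsub_le_measure_Ioi_mul htail hU hx hstep
    calc b * (1 - (ν (Ioi (x / U))).toReal / (μ (Ioi x)).toReal)
        = b * ((μ (Ioi x)).toReal - (ν (Ioi (x / U))).toReal) / (μ (Ioi x)).toReal := by
          field_simp
      _ ≤ (ENNReal.ofReal b * (μ (Ioi x) - ν (Ioi (x / U)))).toReal / (μ (Ioi x)).toReal := by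
          rw [ENNReal.toReal_mul, ENNReal.toReal_ofReal hb0.le]
          gcongr
          exact ENNReal.le_toReal_sub (measure_ne_top ν _)
      _ ≤ tailRatio μ l x :=
          div_le_div_of_nonneg_right (ENNReal.toReal_mono (measure_ne_top μ _) hsplit) hFx'.le
  have hlim : Tendsto (fun x => b * (1 - (ν (Ioi (x / U))).toReal / (μ (Ioi x)).toReal))
      atTop (𝓝 b) := by
    simpa using ((hnegl U hU).const_sub 1).const_mul b
  rw [← hlim.liminf_eq]
  exact liminf_le_liminf hlower hlim.isBoundedUnder_ge
    (isBoundedUnder_le_tailRatio μ hl).isCoboundedUnder_ge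

theorem IntRegVary.of_tail_eq_lintegral [IsProbabilityMeasure μV] [IsFiniteMeasure ν]
    [IsFiniteMeasure μ] (htail : ∀ x, μ (Ioi x) = ∫⁻ y in Ioi 0, μV (Ioi (x / y)) ∂ν)
    (hν : ν (Ioi 0) ≠ 0)
    (hνexp : ∃ δ C : ℝ, 0 < δ ∧ 0 ≤ C ∧ ∀ s, 0 ≤ s →
      ν (Ioi s) ≤ ENNReal.ofReal (C * Real.exp (-δ * s)))
    (hV : IntRegVary μV) : IntRegVary μ := by
  obtain ⟨K, c, x₀, hc, hx₀, hlow⟩ :=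
    exists_rpow_neg_le_measure_Ioi_of_tail_eq htail hV.domVary hν
  obtain ⟨δ, C, hδ, hC, hνle⟩ := hνexp
  have hpos : ∀ᶠ x in atTop, 0 < μ (Ioi x) := by
    filter_upwards [eventually_ge_atTop x₀] with x hx
    have hx0 : 0 < x := hx₀.trans_le hx
    have hreal : 0 < (μ (Ioi x)).toReal := (by positivity : 0 < c * x ^ (-K)).trans_le (hlow x hx)
    exact (ENNReal.toReal_pos_iff.1 hreal).1
  have hcompare : ∀ l, 1 < l → liminf (tailRatio μV l) atTop ≤ liminf (tailRatio μ l) atTop :=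
    fun l hl => liminf_tailRatio_le_liminf_tailRatio_of_tail_eq htail hpos
      (fun U hU => tendsto_measure_Ioi_div_measure_Ioi_of_exp_of_rpow hδ hC hνle hc hlow hU) hl.le
  exact tendsto_of_tendsto_of_tendsto_of_le_of_le' hV tendsto_const_nhds
    (eventually_nhdsWithin_of_forall hcompare)
    (eventually_nhdsWithin_of_forall fun l hl => liminf_tailRatio_le_one μ (le_of_lt hl))

end ProductTail

theorem cph_intRegVary_general
    {Ω : Type*} [MeasureSpace Ω] [IsProbabilityMeasure (ℙ : Measure Ω)]
    {p : ℕ} (piv : Fin p → ℝ) (T : Matrix (Fin p) (Fin p) ℝ) (hPH : IsPHRepr piv T)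
    (V Y : Ω → ℝ) (hVm : Measurable V) (hYm : Measurable Y)
    (hInd : IndepFun V Y ℙ)
    (hYlaw : Measure.map Y ℙ = phMeasure piv T)
    (hV : IntRegVary (Measure.map V ℙ)) :
    IntRegVary (Measure.map (fun ω => V ω * Y ω) ℙ) := by
  have := Measure.isProbabilityMeasure_map (μ := ℙ) hVm.aemeasurable
  have := Measure.isProbabilityMeasure_map (μ := ℙ) hYm.aemeasurable
  have : IsProbabilityMeasure (Measure.map (fun ω => V ω * Y ω) ℙ) :=
    Measure.isProbabilityMeasure_map (hVm.mul hYm).aemeasurable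
  have hlaw : Measure.map (fun ω => V ω * Y ω) ℙ
      = ((Measure.map V ℙ).prod (Measure.map Y ℙ)).map (fun q : ℝ × ℝ => q.1 * q.2) := by
    rw [← (indepFun_iff_map_prod_eq_prod_map_map hVm.aemeasurable hYm.aemeasurable).1 hInd,
      Measure.map_map (by fun_prop) (hVm.prodMk hYm)]
    rfl
  have hY₀ : Measure.map Y ℙ (Iic 0) = 0 := hYlaw ▸ phMeasure_Iic_zero piv T
  refine IntRegVary.of_tail_eq_lintegral (fun x => hlaw ▸ map_mul_prod_apply_Ioi hY₀ x) ?_ ?_ hV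
  · rw [← compl_Iic, (prob_compl_eq_one_iff measurableSet_Iic).2 hY₀]
    exact one_ne_zero
  · exact hYlaw ▸ exists_phMeasure_Ioi_le_exp piv T hPH.eig_neg

/-- if `V ≥ 0` has intermediate regularly varying law and `Y ~ PH(π,T)` is
independent of `V`, then the law of `VY` is also intermediate regularly varying. -/
theorem cph_intRegVary
    {Ω : Type*} [MeasureSpace Ω] [IsProbabilityMeasure (ℙ : Measure Ω)]
    {p : ℕ} (piv : Fin p → ℝ) (T : Matrix (Fin p) (Fin p) ℝ) (hPH : IsPHRepr piv T)
    (V Y : Ω → ℝ) (hVm : Measurable V) (hYm : Measurable Y)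
    (hInd : IndepFun V Y ℙ)
    (hVnn : ∀ᵐ ω ∂ℙ, 0 ≤ V ω)
    (hYlaw : Measure.map Y ℙ = phMeasure piv T)
    (hV : IntRegVary (Measure.map V ℙ)) :
    IntRegVary (Measure.map (fun ω => V ω * Y ω) ℙ) :=
  cph_intRegVary_general piv T hPH V Y hVm hYm hInd hYlaw hV
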